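/- Let f : ℝ² → ℝ² be locally Lipschitz, let Ω ⊆ ℝ² be a minimal set of the ODE x' = f(x), and let x : ℝ → ℝ² be a solution whose image is contained in Ω. If there exists t* > 0 with x(t*) = x(0), then x is periodic with period t*, i.e., x(t + t*) = x(t) for all t ∈ ℝ, and the image of x equals Ω. -/

import Mathlib

open Set Metric MeasureTheory

abbrev Plane := EuclideanSpace ℝ (Fin 2)

/-- A solution of the ODE x' = f(x): a differentiable curve satisfying deriv x t = f (x t). -/
def IsSolution (f : Plane → Plane) (x : ℝ → Plane) : Prop :=
  Differentiable ℝ x ∧ ∀ t : ℝ, deriv x t = f (x t)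

/-- Ω is invariant: every point of Ω starts some solution staying in Ω, and every
solution starting in Ω remains in Ω. -/
def IsInvariantSet (f : Plane → Plane) (Ω : Set Plane) : Prop :=
  (∀ y ∈ Ω, ∃ x : ℝ → Plane, IsSolution f x ∧ x 0 = y ∧ Set.range x ⊆ Ω) ∧
  (∀ x : ℝ → Plane, IsSolution f x → x 0 ∈ Ω → Set.range x ⊆ Ω)

/-- Ω is a minimal set: nonempty, compact, invariant, with no proper nonempty compact
invariant subset. -/
def IsMinimalSet (f : Plane → Plane) (Ω : Set Plane) : Prop :=
  Ω.Nonempty ∧ IsCompact Ω ∧ IsInvariantSet f Ω ∧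
  ∀ Ω' : Set Plane, Ω'.Nonempty → IsCompact Ω' → IsInvariantSet f Ω' → Ω' ⊆ Ω → Ω' = Ω

/-! The periodicity comes from uniqueness: `t ↦ x (t + t*)` is a solution with the same initial
value as `x`. The orbit of a periodic solution is then a nonempty compact invariant subset of `Ω`,
so it is `Ω` by minimality. -/

/-- The set where two solutions agree is closed, and open by local uniqueness, hence all of `ℝ`. -/
theorem ODE_solution_unique_of_locallyLipschitz {E : Type*} [NormedAddCommGroup E]
    [NormedSpace ℝ E] {v : E → E} (hv : LocallyLipschitz v) {f g : ℝ → E}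
    (hf : ∀ t, HasDerivAt f (v (f t)) t) (hg : ∀ t, HasDerivAt g (v (g t)) t) {t₀ : ℝ}
    (heq : f t₀ = g t₀) : f = g := by
  have hclopen : IsClopen {t | f t = g t} := by
    refine ⟨isClosed_eq (continuous_iff_continuousAt.2 fun t => (hf t).continuousAt)
      (continuous_iff_continuousAt.2 fun t => (hg t).continuousAt), ?_⟩
    refine isOpen_iff_mem_nhds.2 fun t (ht : f t = g t) => ?_
    obtain ⟨K, s, hs, hK⟩ := hv (f t)
    have hfs : ∀ᶠ u in nhds t, f u ∈ s := (hf t).continuousAt.preimage_mem_nhds hs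
    have hgs : ∀ᶠ u in nhds t, g u ∈ s := (hg t).continuousAt.preimage_mem_nhds (ht ▸ hs)
    exact ODE_solution_unique_of_eventually (v := fun _ => v) (s := fun _ => s)
      (Filter.Eventually.of_forall fun _ => hK) (hfs.mono fun u hu => ⟨hf u, hu⟩)
      (hgs.mono fun u hu => ⟨hg u, hu⟩) ht
  exact funext (eq_univ_iff_forall.1 (hclopen.eq_univ ⟨t₀, heq⟩))

namespace IsSolution

variable {f : Plane → Plane} {x : ℝ → Plane}

theorem hasDerivAt (hx : IsSolution f x) (t : ℝ) : HasDerivAt x (f (x t)) t :=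
  hx.2 t ▸ (hx.1 t).hasDerivAt

theorem comp_add_const (hx : IsSolution f x) (c : ℝ) : IsSolution f (fun t => x (t + c)) := by
  refine ⟨hx.1.comp (differentiable_id.add_const c), fun t => ?_⟩
  rw [deriv_comp_add_const, hx.2]

theorem eq_of_apply_zero_eq (hf : LocallyLipschitz f) {y : ℝ → Plane} (hx : IsSolution f x)
    (hy : IsSolution f y) (h0 : x 0 = y 0) : x = y :=
  ODE_solution_unique_of_locallyLipschitz hf hx.hasDerivAt hy.hasDerivAt h0

theorem isInvariantSet_range (hf : LocallyLipschitz f) (hx : IsSolution f x) :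
    IsInvariantSet f (range x) := by
  have hrange : ∀ s, range (fun t => x (t + s)) = range x := fun s =>
    (Equiv.addRight s).surjective.range_comp x
  constructor
  · rintro _ ⟨s, rfl⟩
    exact ⟨_, hx.comp_add_const s, by simp, (hrange s).le⟩
  · rintro y hy ⟨s, hs⟩
    rw [hy.eq_of_apply_zero_eq hf (hx.comp_add_const s) (by simpa using hs.symm), hrange s]

end IsSolution

/-- If a solution in a minimal set returns to its initial point at some time t* > 0,
then it is periodic with period t* and its image is all of Ω. -/
theorem minimal_set_periodic (f : Plane → Plane) (hf : LocallyLipschitz f)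
    (Ω : Set Plane) (hΩ : IsMinimalSet f Ω)
    (x : ℝ → Plane) (hx : IsSolution f x) (hxΩ : Set.range x ⊆ Ω)
    (tstar : ℝ) (htstar : 0 < tstar) (hper : x tstar = x 0) :
    (∀ t : ℝ, x (t + tstar) = x t) ∧ Set.range x = Ω := by
  have hperiodic : Function.Periodic x tstar :=
    congrFun <| (hx.comp_add_const tstar).eq_of_apply_zero_eq hf hx (by simpa using hper)
  refine ⟨hperiodic, hΩ.2.2.2 _ (range_nonempty x) ?_ (hx.isInvariantSet_range hf) hxΩ⟩
  exact hperiodic.compact_of_continuous htstar.ne' hx.1.continuous
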